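/- arXiv:2106.11267 — 6 statements merged into one kernel-verified Lean document; each statement's English description precedes it below -/
import Mathlib

section
/- For any matrices B, C, D and any matrix X of appropriate size, the rank of the block matrix [[B, C], [X, D]] is at least rank([B C]) + rank([C; D]) - rank(C). -/
/-!
Write `M` for the block matrix. Cutting off its bottom rows and its left columns gives
`[B C] = P * M`, `[C; D] = M * R` and `C = P * M * R` for suitable selection matrices `P`, `R`,
so the bound is Frobenius' rank inequality `rk(PM) + rk(MR) ≤ rk(PMR) + rk(M)`. That in turn is
rank–nullity for `P` restricted to `im(MR) ≤ im(M)`: the kernel can only grow with the subspace.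
-/

open Matrix

namespace Submodule

variable {K V W : Type*} [Field K] [AddCommGroup V] [Module K V] [AddCommGroup W] [Module K W]
  [FiniteDimensional K V]

theorem finrank_map_add_finrank_ker_inf (f : V →ₗ[K] W) (U : Submodule K V) :
    Module.finrank K (U.map f) + Module.finrank K ↥(LinearMap.ker f ⊓ U) = Module.finrank K U := by
  have h := LinearMap.finrank_range_add_finrank_ker (f.domRestrict U)
  have hker : comap U.subtype (LinearMap.ker f) = comap U.subtype (LinearMap.ker f ⊓ U) := by
    rw [comap_inf, comap_subtype_self, inf_top_eq]
  rwa [LinearMap.range_domRestrict, LinearMap.ker_domRestrict, hker,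
    (comapSubtypeEquivOfLe inf_le_right).finrank_eq] at h

theorem finrank_map_add_finrank_le_of_le (f : V →ₗ[K] W) {S T : Submodule K V} (hST : S ≤ T) :
    Module.finrank K (T.map f) + Module.finrank K S ≤
      Module.finrank K (S.map f) + Module.finrank K T := by
  have hS := finrank_map_add_finrank_ker_inf f S
  have hT := finrank_map_add_finrank_ker_inf f T
  have hker := finrank_mono (inf_le_inf_left (LinearMap.ker f) hST)
  omega

end Submodule

namespace Matrix

variable {K α β γ δ : Type*} [Field K] [Fintype β] [Fintype γ] [Fintype δ]

theorem range_mulVecLin_mul (A : Matrix α β K) (B : Matrix β γ K) :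
    LinearMap.range (A * B).mulVecLin = (LinearMap.range B.mulVecLin).map A.mulVecLin := by
  rw [mulVecLin_mul, LinearMap.range_comp]

theorem rank_mul_add_rank_mul_le (A : Matrix α β K) (B : Matrix β γ K) (C : Matrix γ δ K) :
    (A * B).rank + (B * C).rank ≤ (A * B * C).rank + B.rank := by
  have hBC : LinearMap.range (B * C).mulVecLin ≤ LinearMap.range B.mulVecLin := by
    rw [mulVecLin_mul]
    exact LinearMap.range_comp_le_range _ _
  have h := Submodule.finrank_map_add_finrank_le_of_le A.mulVecLin hBC
  rwa [← range_mulVecLin_mul, ← range_mulVecLin_mul, ← Matrix.mul_assoc] at h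

end Matrix

theorem stmt0 (K : Type*) [Field K] (m n p q : ℕ)
    (B : Matrix (Fin m) (Fin p) K) (C : Matrix (Fin m) (Fin q) K)
    (D : Matrix (Fin n) (Fin q) K) (X : Matrix (Fin n) (Fin p) K) :
    (Matrix.fromBlocks B C X D).rank ≥
      (Matrix.fromCols B C).rank + (Matrix.fromRows C D).rank - C.rank := by
  set M := fromBlocks B C X D
  let P : Matrix (Fin m) (Fin m ⊕ Fin n) K := fromCols 1 0
  let R : Matrix (Fin p ⊕ Fin q) (Fin q) K := fromRows 0 1
  have hPM : P * M = fromCols B C := by simp [P, M, fromCols_mul_fromBlocks]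
  have hMR : M * R = fromRows C D := by simp [R, M, fromBlocks_mul_fromRows]
  have hPMR : P * M * R = C := by simp [hPM, R, fromCols_mul_fromRows]
  have h := rank_mul_add_rank_mul_le P M R
  rw [hPMR, hPM, hMR] at h
  omega
end

section
/- If C is a square invertible m×m matrix, then for any X, rank([[B, C], [X, D]]) ≥ m, with equality if and only if X = D C⁻¹ B. -/
/-!
Multiplying by the block unitriangular factors of the Schur complement factorization and swapping
the two column blocks turns `[[B, C], [X, D]]` into `[[C, 0], [0, X - D C⁻¹ B]]`, so its rank is
`m + rank (X - D C⁻¹ B)`.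
-/

open Matrix

theorem Submodule.finrank_prod {K V W : Type*} [DivisionRing K] [AddCommGroup V] [Module K V]
    [AddCommGroup W] [Module K W] (p : Submodule K V) (q : Submodule K W)
    [FiniteDimensional K p] [FiniteDimensional K q] :
    Module.finrank K (p.prod q) = Module.finrank K p + Module.finrank K q := by
  have hinj : Function.Injective (p.subtype.prodMap q.subtype) :=
    Prod.map_injective.mpr ⟨p.injective_subtype, q.injective_subtype⟩
  rw [← Module.finrank_prod, ← LinearMap.finrank_range_of_inj hinj, LinearMap.range_prodMap,
    Submodule.range_subtype, Submodule.range_subtype]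

namespace Matrix

variable {K : Type*} [Field K] {l m n o : Type*}

theorem rank_eq_zero_iff [Fintype n] {A : Matrix m n K} : A.rank = 0 ↔ A = 0 := by
  classical
  rw [rank, Submodule.finrank_eq_zero, LinearMap.range_eq_bot, ← toLin'_apply',
    LinearEquiv.map_eq_zero_iff]

section

variable [Fintype m] [Fintype n]

theorem mulVecLin_fromBlocks_zero₁₂_zero₂₁ (A : Matrix l m K) (D : Matrix o n K) :
    (fromBlocks A 0 0 D).mulVecLin =
      (LinearEquiv.sumArrowLequivProdArrow l o K K).symm.toLinearMap ∘ₗ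
        A.mulVecLin.prodMap D.mulVecLin ∘ₗ
          (LinearEquiv.sumArrowLequivProdArrow m n K K).toLinearMap := by
  ext v i
  rcases i with i | i <;> simp [fromBlocks_mulVec] <;> rfl

theorem rank_fromBlocks_zero₁₂_zero₂₁ (A : Matrix l m K) (D : Matrix o n K) :
    (fromBlocks A 0 0 D).rank = A.rank + D.rank := by
  rw [rank, mulVecLin_fromBlocks_zero₁₂_zero₂₁, LinearMap.range_comp,
    LinearMap.range_comp_of_range_eq_top _ (LinearEquiv.range _), LinearEquiv.finrank_map_eq,
    LinearMap.range_prodMap, Submodule.finrank_prod, rank, rank]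

variable [Fintype l] [DecidableEq l] [DecidableEq m] [DecidableEq n]

theorem rank_fromBlocks_of_isUnit₁₁ (A : Matrix m m K) (B : Matrix m n K) (C : Matrix l m K)
    (D : Matrix l n K) (hA : IsUnit A) :
    (fromBlocks A B C D).rank = A.rank + (D - C * A⁻¹ * B).rank := by
  let := hA.invertible
  rw [fromBlocks_eq_of_invertible₁₁, rank_mul_eq_left_of_isUnit_det _ _ (by simp),
    rank_mul_eq_right_of_isUnit_det _ _ (by simp), rank_fromBlocks_zero₁₂_zero₂₁,
    invOf_eq_nonsing_inv]

theorem rank_fromBlocks_of_isUnit₁₂ (A : Matrix m l K) (B : Matrix m m K) (C : Matrix n l K)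
    (D : Matrix n m K) (hB : IsUnit B) :
    (fromBlocks A B C D).rank = B.rank + (C - D * B⁻¹ * A).rank := by
  rw [← rank_fromBlocks_of_isUnit₁₁ B A D C hB,
    ← rank_submatrix _ (Equiv.refl _) (Equiv.sumComm l m)]
  simp

end

end Matrix

theorem stmt2 (K : Type*) [Field K] (m n p : ℕ)
    (B : Matrix (Fin m) (Fin p) K) (C : Matrix (Fin m) (Fin m) K)
    (D : Matrix (Fin n) (Fin m) K) (hC : IsUnit C)
    (X : Matrix (Fin n) (Fin p) K) :
    (Matrix.fromBlocks B C X D).rank ≥ m ∧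
      ((Matrix.fromBlocks B C X D).rank = m ↔ X = D * C⁻¹ * B) := by
  have hrank : (fromBlocks B C X D).rank = m + (X - D * C⁻¹ * B).rank := by
    rw [rank_fromBlocks_of_isUnit₁₂ B C X D hC, rank_of_isUnit C hC, Fintype.card_fin]
  rw [hrank, Nat.add_eq_left, Matrix.rank_eq_zero_iff, sub_eq_zero]
  exact ⟨Nat.le_add_right _ _, Iff.rfl⟩
end

section
/- For matrices B, C, D over a field with C having linearly independent rows (full row rank), there exists X such that rank([[B, C], [X, D]]) = rank([B C]) + rank([C; D]) - rank(C). -/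
/-!
A matrix `C` of full row rank has a right inverse `G`. For `X = D * G * B` the first block
column of `[[B, C], [X, D]]` is `[C; D] * (G * B)`, so the block matrix has the rank of `[C; D]`,
while `[B C]` has rank `m = rank C`.
-/

open Matrix

namespace Matrix

variable {l m n o K R : Type*}

theorem exists_mul_eq_one_of_rank_eq_card [Field K] [Fintype m] [DecidableEq m] [Fintype n]
    (C : Matrix m n K) (hC : C.rank = Fintype.card m) : ∃ G : Matrix n m K, C * G = 1 := by
  refine mulVec_surjective_iff_exists_right_inverse.mp fun y => ?_
  have hrange : LinearMap.range C.mulVecLin = ⊤ :=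
    Submodule.eq_top_of_finrank_eq (by rw [← rank, hC, Module.finrank_fintype_fun_eq_card])
  exact LinearMap.range_eq_top.mp hrange y

theorem rank_le_rank_fromCols_right [CommRing R] [StrongRankCondition R] [Fintype l] [Fintype n]
    [DecidableEq n] (B : Matrix m l R) (C : Matrix m n R) :
    C.rank ≤ (fromCols B C).rank := by
  calc C.rank = (fromCols B C * fromRows (0 : Matrix l n R) (1 : Matrix n n R)).rank := by
        rw [fromCols_mul_fromRows, Matrix.mul_zero, Matrix.mul_one, zero_add]
    _ ≤ (fromCols B C).rank := rank_mul_le_left _ _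

theorem rank_fromCols_mul_self [CommRing R] [StrongRankCondition R] [Fintype n] [DecidableEq n]
    [Fintype o] (A : Matrix m n R) (N : Matrix n o R) :
    (fromCols (A * N) A).rank = A.rank := by
  refine le_antisymm ?_ (rank_le_rank_fromCols_right _ _)
  calc (fromCols (A * N) A).rank = (A * fromCols N (1 : Matrix n n R)).rank := by
        rw [mul_fromCols, Matrix.mul_one]
    _ ≤ A.rank := rank_mul_le_left _ _

end Matrix

theorem stmt9 (K : Type*) [Field K] (m n p q : ℕ)
    (B : Matrix (Fin m) (Fin p) K) (C : Matrix (Fin m) (Fin q) K)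
    (D : Matrix (Fin n) (Fin q) K) (hC : C.rank = m) :
    ∃ X : Matrix (Fin n) (Fin p) K,
      (Matrix.fromBlocks B C X D).rank =
        (Matrix.fromCols B C).rank + (Matrix.fromRows C D).rank - C.rank := by
  obtain ⟨G, hCG⟩ := C.exists_mul_eq_one_of_rank_eq_card (by rw [hC, Fintype.card_fin])
  refine ⟨D * (G * B), ?_⟩
  have hblocks :
      fromBlocks B C (D * (G * B)) D = fromCols (fromRows C D * (G * B)) (fromRows C D) := by
    rw [fromRows_mul, ← Matrix.mul_assoc C, hCG, Matrix.one_mul, fromCols_fromRows_eq_fromBlocks]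
  have hrows : (fromCols B C).rank = m :=
    le_antisymm ((rank_le_card_height _).trans_eq (Fintype.card_fin m))
      (hC.symm.le.trans (rank_le_rank_fromCols_right B C))
  rw [hblocks, rank_fromCols_mul_self, hrows, hC, Nat.add_sub_cancel_left]
end

section
/- For any matrices B (m×p), C (m×q), D (n×q) over a field, there exists an n×p matrix X such that rank([[B, C], [X, D]]) = rank([B C]) + rank([C; D]) - rank(C); that is, the lower bound for the block 2×2 minimal rank completion problem is always attained. -/
/-!
Let `G` be a generalized inverse of `C`, i.e. `C * G * C = C`, and put `E = D - D * G * C`.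
Subtracting `D * G` times the top block row turns `[C; D]` into `[C; E]` and, for the choice
`X = D * G * B`, turns `[[B, C], [X, D]]` into `[[B, C], [0, E]]`. Right multiplication by `G * C`
fixes every row of `C` and kills every row of `E`, so the row space of `E` meets that of `C`, and
that of `[0 E]` meets that of `[B C]`, trivially. Hence both ranks split as sums, giving
`rank [C; D] = rank C + rank E` and `rank [[B, C], [X, D]] = rank [B C] + rank E`.
-/

open Matrix Submodule Set

theorem LinearMap.exists_comp_comp_eq_self {K V W : Type*} [Field K] [AddCommGroup V]
    [Module K V] [AddCommGroup W] [Module K W] (f : V →ₗ[K] W) :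
    ∃ g : W →ₗ[K] V, f ∘ₗ g ∘ₗ f = f := by
  obtain ⟨r, hr⟩ := (LinearMap.range f).subtype.exists_leftInverse_of_injective
    (Submodule.ker_subtype _)
  obtain ⟨s, hs⟩ := f.rangeRestrict.exists_rightInverse_of_surjective f.range_rangeRestrict
  refine ⟨s ∘ₗ r, ?_⟩
  calc f ∘ₗ (s ∘ₗ r) ∘ₗ f
      = (LinearMap.range f).subtype ∘ₗ (f.rangeRestrict ∘ₗ s) ∘ₗ
          (r ∘ₗ (LinearMap.range f).subtype) ∘ₗ f.rangeRestrict := rfl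
    _ = f := by rw [hs, hr]; rfl

namespace Matrix

variable {K : Type*} [Field K]

theorem exists_mul_mul_eq_self {m n : Type*} [Fintype m] [Fintype n] [DecidableEq m]
    [DecidableEq n] (C : Matrix m n K) : ∃ G : Matrix n m K, C * G * C = C := by
  obtain ⟨g, hg⟩ := (toLin' C).exists_comp_comp_eq_self
  refine ⟨LinearMap.toMatrix' g, ?_⟩
  simpa only [LinearMap.toMatrix'_comp, LinearMap.toMatrix'_toLin', Matrix.mul_assoc] using
    congrArg LinearMap.toMatrix' hg

theorem rank_fromCols_zero_left {m l n : Type*} [Fintype l] [Fintype n] [DecidableEq n]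
    (E : Matrix m n K) :
    (fromCols (0 : Matrix m l K) E).rank = E.rank := by
  apply le_antisymm
  · calc (fromCols (0 : Matrix m l K) E).rank
          = (E * (fromCols 0 1 : Matrix n (l ⊕ n) K)).rank := by
          rw [mul_fromCols, Matrix.mul_zero, Matrix.mul_one]
      _ ≤ E.rank := rank_mul_le_left _ _
  · calc E.rank
          = (fromCols (0 : Matrix m l K) E * (fromRows 0 1 : Matrix (l ⊕ n) n K)).rank := by
          rw [fromCols_mul_fromRows, Matrix.zero_mul, Matrix.mul_one, zero_add]
      _ ≤ _ := rank_mul_le_left _ _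

variable {m₁ m₂ n : Type*} [Fintype m₁] [Fintype m₂] [Fintype n]

theorem rank_fromRows_of_disjoint {A : Matrix m₁ n K} {B : Matrix m₂ n K}
    (h : Disjoint (span K (range A.row)) (span K (range B.row))) :
    (fromRows A B).rank = A.rank + B.rank := by
  have hrows : range (fromRows A B).row = range A.row ∪ range B.row := Set.Sum.elim_range _ _
  rw [rank_eq_finrank_span_row, rank_eq_finrank_span_row, rank_eq_finrank_span_row, hrows,
    span_union, ← finrank_sup_add_finrank_inf_eq, h.eq_bot, finrank_bot, add_zero]

theorem disjoint_span_row_of_mul_eq_self_of_mul_eq_zero {A : Matrix m₁ n K}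
    {B : Matrix m₂ n K} (P : Matrix n n K) (hA : A * P = A) (hB : B * P = 0) :
    Disjoint (span K (range A.row)) (span K (range B.row)) := by
  rw [← range_vecMulLinear, ← range_vecMulLinear, disjoint_def]
  rintro v ⟨x, rfl⟩ ⟨y, hy⟩
  rw [vecMulLinear_apply, vecMulLinear_apply] at hy
  calc x ᵥ* A = x ᵥ* A ᵥ* P := by rw [vecMul_vecMul, hA]
    _ = 0 := by rw [← hy, vecMul_vecMul, hB, vecMul_zero]

theorem rank_fromRows_add_mul [DecidableEq m₁] [DecidableEq m₂] (A : Matrix m₁ n K)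
    (B : Matrix m₂ n K) (Y : Matrix m₂ m₁ K) :
    (fromRows A (B + Y * A)).rank = (fromRows A B).rank := by
  have hrowOp : fromRows A (B + Y * A) =
      (fromBlocks 1 0 Y 1 : Matrix (m₁ ⊕ m₂) (m₁ ⊕ m₂) K) * fromRows A B := by
    rw [fromBlocks_mul_fromRows, Matrix.one_mul, Matrix.zero_mul, add_zero, Matrix.one_mul,
      add_comm]
  rw [hrowOp, rank_mul_eq_right_of_isUnit_det _ _ (by simp)]

end Matrix

theorem stmt10 (K : Type*) [Field K] (m n p q : ℕ)
    (B : Matrix (Fin m) (Fin p) K) (C : Matrix (Fin m) (Fin q) K)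
    (D : Matrix (Fin n) (Fin q) K) :
    ∃ X : Matrix (Fin n) (Fin p) K,
      (Matrix.fromBlocks B C X D).rank =
        (Matrix.fromCols B C).rank + (Matrix.fromRows C D).rank - C.rank := by
  obtain ⟨G, hG⟩ := exists_mul_mul_eq_self C
  set E := D - D * G * C
  have hC : C * (G * C) = C := by rw [← Matrix.mul_assoc, hG]
  have hE : E * (G * C) = 0 := by
    rw [Matrix.sub_mul, Matrix.mul_assoc, Matrix.mul_assoc, hC, sub_self]
  have hrankCD : (fromRows C D).rank = C.rank + E.rank := by
    rw [← sub_add_cancel D (D * G * C), rank_fromRows_add_mul,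
      rank_fromRows_of_disjoint (disjoint_span_row_of_mul_eq_self_of_mul_eq_zero _ hC hE)]
  have hrankBCD : (fromBlocks B C (D * G * B) D).rank = (fromCols B C).rank + E.rank := by
    have hrowOp : fromBlocks B C (D * G * B) D =
        fromRows (fromCols B C) (fromCols 0 E + D * G * fromCols B C) := by
      rw [← fromRows_fromCols_eq_fromBlocks, mul_fromCols]
      congr 1
      ext i (j | j) <;> simp [E, Matrix.mul_assoc]
    let P : Matrix (Fin p ⊕ Fin q) (Fin p ⊕ Fin q) K := fromBlocks 1 0 0 (G * C)
    have hBC : fromCols B C * P = fromCols B C := by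
      rw [fromCols_mul_fromBlocks]; simp [hC]
    have h0E : fromCols (0 : Matrix (Fin n) (Fin p) K) E * P = 0 := by
      rw [fromCols_mul_fromBlocks]; simp [hE]
    rw [hrowOp, rank_fromRows_add_mul,
      rank_fromRows_of_disjoint (disjoint_span_row_of_mul_eq_self_of_mul_eq_zero P hBC h0E),
      rank_fromCols_zero_left]
  exact ⟨D * G * B, by omega⟩
end

section
/- For any matrices B, C, D over a field, the minimum over all X of rank([[B, C], [X, D]]) equals rank([B C]) + rank([C; D]) - rank(C). -/
/-!
Let `π` project `K^(m+n)` onto its first `m` coordinates. Rank–nullity for `π` restricted to a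
column space gives `rank [[B, C], [X, D]] = rank [B C] + dim (col [[B, C], [X, D]] ∩ ker π)` and
`rank [C; D] = rank C + dim (col [C; D] ∩ ker π)`; since `col [C; D] ⊆ col [[B, C], [X, D]]`,
this is the lower bound. It is attained at `X = D U` for any `U` with `C U x = B x` whenever
`B x ∈ col C`: a column combination with vanishing top part, `B x + C y = 0`, is then
`[C; D] (U x + y)`.
-/

open Matrix LinearMap Submodule Module

section LinearAlgebra

variable {K U V W : Type*} [Field K] [AddCommGroup U] [Module K U] [AddCommGroup V] [Module K V]
  [AddCommGroup W] [Module K W]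

theorem Submodule.finrank_map_add_finrank_inf_ker [FiniteDimensional K V] (π : V →ₗ[K] W)
    (S : Submodule K V) : finrank K (S.map π) + finrank K ↥(S ⊓ ker π) = finrank K S := by
  have h := (π.domRestrict S).finrank_range_add_finrank_ker
  rwa [range_domRestrict, ker_domRestrict, (S.equivSubtypeMap _).finrank_eq,
    map_comap_subtype] at h

theorem LinearMap.exists_lift_of_mem_range (f : V →ₗ[K] W) (g : U →ₗ[K] W) :
    ∃ h : V →ₗ[K] U, ∀ x, f x ∈ range g → g (h x) = f x := by
  obtain ⟨F, hF⟩ := (range g).exists_isCompl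
  obtain ⟨s, hs⟩ := g.rangeRestrict.exists_rightInverse_of_surjective g.range_rangeRestrict
  refine ⟨s ∘ₗ (range g).projectionOnto F hF ∘ₗ f, fun x hx => ?_⟩
  simpa [projectionOnto_apply_of_mem_left hF hx] using congr(($hs ⟨f x, hx⟩ : W))

end LinearAlgebra

namespace Matrix

variable {K : Type*} [Field K] {m n p q : Type*} [Fintype p] [Fintype q]

theorem map_funLeft_inl_range_mulVecLin_fromRows (A : Matrix m p K) (A' : Matrix n p K) :
    (range (fromRows A A').mulVecLin).map (funLeft K K Sum.inl) = range A.mulVecLin := by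
  rw [← range_comp]
  rfl

theorem rank_fromRows_eq_rank_add_finrank_inf_ker [Fintype m] [Fintype n] (A : Matrix m p K)
    (A' : Matrix n p K) :
    (fromRows A A').rank =
      A.rank + finrank K ↥(range (fromRows A A').mulVecLin ⊓ ker (funLeft K K Sum.inl)) := by
  rw [rank, rank, ← finrank_map_add_finrank_inf_ker (funLeft K K Sum.inl),
    map_funLeft_inl_range_mulVecLin_fromRows]

theorem range_mulVecLin_le_range_mulVecLin_fromCols_right (A : Matrix m p K)
    (A' : Matrix m q K) : range A'.mulVecLin ≤ range (fromCols A A').mulVecLin := by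
  rintro _ ⟨y, rfl⟩
  exact ⟨Sum.elim 0 y, by simp⟩

theorem rank_fromCols_add_rank_fromRows_le [Fintype m] [Fintype n] (B : Matrix m p K)
    (C : Matrix m q K) (X : Matrix n p K) (D : Matrix n q K) :
    (fromCols B C).rank + (fromRows C D).rank ≤ (fromBlocks B C X D).rank + C.rank := by
  have hle := range_mulVecLin_le_range_mulVecLin_fromCols_right (fromRows B X) (fromRows C D)
  rw [fromCols_fromRows_eq_fromBlocks] at hle
  have := finrank_mono (inf_le_inf_right (ker (funLeft K K Sum.inl)) hle)
  have hM := rank_fromRows_eq_rank_add_finrank_inf_ker (fromCols B C) (fromCols X D)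
  rw [fromRows_fromCols_eq_fromBlocks] at hM
  have hCD := rank_fromRows_eq_rank_add_finrank_inf_ker C D
  omega

theorem exists_mulVec_eq_of_mem_range [DecidableEq p] (B : Matrix m p K) (C : Matrix m q K) :
    ∃ U : Matrix q p K, ∀ x, B *ᵥ x ∈ range C.mulVecLin → C *ᵥ (U *ᵥ x) = B *ᵥ x := by
  obtain ⟨h, hh⟩ := B.mulVecLin.exists_lift_of_mem_range C.mulVecLin
  exact ⟨toMatrix' h, fun x hx => by simpa using hh x hx⟩

theorem fromBlocks_mul_mulVec_sumElim_eq [Fintype m] {B : Matrix m p K} {C : Matrix m q K}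
    {U : Matrix q p K} (hU : ∀ x, B *ᵥ x ∈ range C.mulVecLin → C *ᵥ (U *ᵥ x) = B *ᵥ x)
    (D : Matrix n q K) {x : p → K} {y : q → K} (h : B *ᵥ x + C *ᵥ y = 0) :
    fromBlocks B C (D * U) D *ᵥ Sum.elim x y = fromRows C D *ᵥ (U *ᵥ x + y) := by
  have hBx : C *ᵥ (U *ᵥ x) = B *ᵥ x :=
    hU x ⟨-y, by simpa [mulVec_neg] using (eq_neg_of_add_eq_zero_left h).symm⟩
  rw [fromBlocks_mulVec, fromRows_mulVec, Sum.elim_comp_inl, Sum.elim_comp_inr, h,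
    ← mulVec_mulVec, mulVec_add, mulVec_add, hBx, h]

theorem rank_fromBlocks_mul_add_rank_le [Fintype m] [Fintype n] {B : Matrix m p K}
    {C : Matrix m q K} {U : Matrix q p K}
    (hU : ∀ x, B *ᵥ x ∈ range C.mulVecLin → C *ᵥ (U *ᵥ x) = B *ᵥ x) (D : Matrix n q K) :
    (fromBlocks B C (D * U) D).rank + C.rank ≤ (fromCols B C).rank + (fromRows C D).rank := by
  have hM := rank_fromRows_eq_rank_add_finrank_inf_ker (fromCols B C) (fromCols (D * U) D)
  rw [fromRows_fromCols_eq_fromBlocks] at hM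
  have hCD := rank_fromRows_eq_rank_add_finrank_inf_ker C D
  suffices range (fromBlocks B C (D * U) D).mulVecLin ⊓ ker (funLeft K K Sum.inl) ≤
      range (fromRows C D).mulVecLin ⊓ ker (funLeft K K Sum.inl) by
    have := finrank_mono this
    omega
  rintro _ ⟨⟨z, rfl⟩, hz⟩
  obtain ⟨x, y, rfl⟩ : ∃ x y, z = Sum.elim x y := ⟨_, _, (Sum.elim_comp_inl_inr z).symm⟩
  have h : B *ᵥ x + C *ᵥ y = 0 := by
    simpa [fromBlocks_mulVec, funLeft] using hz
  exact ⟨⟨U *ᵥ x + y, (fromBlocks_mul_mulVec_sumElim_eq hU D h).symm⟩, hz⟩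

end Matrix

theorem stmt11 (K : Type*) [Field K] (m n p q : ℕ)
    (B : Matrix (Fin m) (Fin p) K) (C : Matrix (Fin m) (Fin q) K)
    (D : Matrix (Fin n) (Fin q) K) :
    IsLeast {r : ℕ | ∃ X : Matrix (Fin n) (Fin p) K, (Matrix.fromBlocks B C X D).rank = r}
      ((Matrix.fromCols B C).rank + (Matrix.fromRows C D).rank - C.rank) := by
  obtain ⟨U, hU⟩ := exists_mulVec_eq_of_mem_range B C
  have hlower := fun X => rank_fromCols_add_rank_fromRows_le B C X D
  have hupper := rank_fromBlocks_mul_add_rank_le hU D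
  refine ⟨⟨D * U, by have := hlower (D * U); omega⟩, ?_⟩
  rintro _ ⟨X, rfl⟩
  have := hlower X
  omega
end

section
/- Given matrices A11 (m1×p), A21 (m2×p), A22 (m2×q), An2 (n×q), there exists an n×p matrix X that simultaneously minimizes rank([A11; A21; X]) and rank([[A21, A22], [X, An2]]) over all choices of X. -/
/-!
Let `V` be the row space of `A22`. Split every row of `An2` as `C i ᵥ* A22` plus a vector of a
fixed complement of `V`, and take `X = C * A21`. The rows of `X` lie in the row space of `A21`, so
they add nothing to the rank of the first block. Subtracting `C` times the first block row from
the second shows that the second block has rank at most `rank [A21 A22] + rank (An2 - C * A22)`,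
and the last rank is `dim ((row An2 + V) / V)`. For any `Y`, projecting the row space of
`[[A21, A22], [Y, An2]]` to the last `q` coordinates modulo `V` kills the rows of `[A21 A22]` and
reaches the rows of `An2`, so by rank–nullity that rank is at least the same sum.
-/

open Matrix Submodule Module

namespace Submodule

variable {K E F : Type*} [Field K] [AddCommGroup E] [Module K E] [AddCommGroup F] [Module K F]

theorem finrank_add_finrank_map_le_of_le_ker [FiniteDimensional K E] (g : E →ₗ[K] F)
    {S T : Submodule K E} (hTS : T ≤ S) (hTg : T ≤ LinearMap.ker g) :
    finrank K T + finrank K (S.map g) ≤ finrank K S := by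
  have hrn := (g.domRestrict S).finrank_range_add_finrank_ker
  rw [LinearMap.range_domRestrict, LinearMap.ker_domRestrict] at hrn
  have hT : finrank K T ≤ finrank K ((LinearMap.ker g).comap S.subtype) :=
    (comapSubtypeEquivOfLe hTS).finrank_eq.symm.trans_le (finrank_mono (comap_mono hTg))
  lia

theorem finrank_map_eq_of_disjoint_ker (f : E →ₗ[K] F) {L : Submodule K E}
    (h : Disjoint L (LinearMap.ker f)) : finrank K (L.map f) = finrank K L := by
  rw [← LinearMap.range_domRestrict]
  exact (LinearEquiv.ofInjective _ (LinearMap.injective_domRestrict_iff.mpr h)).finrank_eq.symm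

end Submodule

namespace Matrix

variable {K l m m₁ n n₁ n₂ : Type*} [Field K]

theorem span_range_row_fromRows (A : Matrix m n K) (B : Matrix l n K) :
    span K (Set.range (fromRows A B).row)
      = span K (Set.range A.row) ⊔ span K (Set.range B.row) := by
  rw [← span_union]
  exact congrArg _ (Set.Sum.elim_range A B)

theorem vecMul_mem_span_range_row [Fintype m] (c : m → K) (A : Matrix m n K) :
    c ᵥ* A ∈ span K (Set.range A.row) :=
  range_vecMulLinear A ▸ LinearMap.mem_range_self _ c

theorem span_range_row_mul_le [Fintype m] (C : Matrix l m K) (A : Matrix m n K) :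
    span K (Set.range (C * A).row) ≤ span K (Set.range A.row) :=
  span_le.2 <| Set.range_subset_iff.2 fun i => vecMul_mem_span_range_row (C i) A

theorem rank_fromRows_le_add [Fintype n] [Finite m] [Finite l] (A : Matrix m n K)
    (B : Matrix l n K) : (fromRows A B).rank ≤ A.rank + B.rank := by
  rw [rank_eq_finrank_span_row, rank_eq_finrank_span_row, rank_eq_finrank_span_row,
    span_range_row_fromRows]
  exact finrank_add_le_finrank_add_finrank _ _

theorem rank_fromCols_zero_le [Fintype n₁] [Fintype n₂] [DecidableEq n₂] (D : Matrix l n₂ K) :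
    (fromCols (0 : Matrix l n₁ K) D).rank ≤ D.rank := by
  have hfactor : fromCols (0 : Matrix l n₁ K) D
      = D * fromCols (0 : Matrix n₂ n₁ K) (1 : Matrix n₂ n₂ K) := by
    rw [mul_fromCols, Matrix.mul_zero, Matrix.mul_one]
  rw [hfactor]
  exact rank_mul_le_left _ _

theorem rank_fromRows_fromRows_mul_le [Fintype n] [Fintype m] [Finite l] [Finite m₁]
    (A : Matrix m₁ n K) (B : Matrix m n K) (C : Matrix l m K) (Y : Matrix l n K) :
    (fromRows A (fromRows B (C * B))).rank ≤ (fromRows A (fromRows B Y)).rank := by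
  rw [rank_eq_finrank_span_row, rank_eq_finrank_span_row]
  refine finrank_mono ?_
  simp only [span_range_row_fromRows]
  exact sup_le_sup_left (sup_le le_sup_left ((span_range_row_mul_le C B).trans le_sup_left)) _

theorem rank_fromBlocks_mul_le [Fintype n₁] [Fintype n₂] [Fintype m] [Fintype l] [DecidableEq m]
    [DecidableEq l] [DecidableEq n₂] (A : Matrix m n₁ K) (B : Matrix m n₂ K) (C : Matrix l m K)
    (D : Matrix l n₂ K) :
    (fromBlocks A B (C * A) D).rank ≤ (fromCols A B).rank + (D - C * B).rank := by
  have hfactor : fromBlocks A B (C * A) D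
      = fromBlocks (1 : Matrix m m K) 0 C (1 : Matrix l l K) * fromBlocks A B 0 (D - C * B) := by
    simp [fromBlocks_multiply]
  rw [hfactor, ← fromRows_fromCols_eq_fromBlocks]
  exact (rank_mul_le_right _ _).trans <|
    (rank_fromRows_le_add _ _).trans (Nat.add_le_add_left (rank_fromCols_zero_le _) _)

theorem rank_fromCols_add_finrank_map_mkQ_le [Fintype n₁] [Fintype n₂] [Finite m] [Finite l]
    (A : Matrix m n₁ K) (B : Matrix m n₂ K) (Y : Matrix l n₁ K) (D : Matrix l n₂ K) :
    (fromCols A B).rank + finrank K ((span K (Set.range D.row)).map (span K (Set.range B.row)).mkQ)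
      ≤ (fromBlocks A B Y D).rank := by
  set V := span K (Set.range B.row)
  set T := span K (Set.range (fromCols A B).row)
  set π : (n₁ ⊕ n₂ → K) →ₗ[K] n₂ → K := LinearMap.funLeft K K Sum.inr
  rw [← fromRows_fromCols_eq_fromBlocks, rank_eq_finrank_span_row, rank_eq_finrank_span_row,
    span_range_row_fromRows]
  have hTker : T ≤ LinearMap.ker (V.mkQ ∘ₗ π) :=
    span_le.2 <| Set.range_subset_iff.2 fun i =>
      (Quotient.mk_eq_zero V).2 (subset_span ⟨i, rfl⟩)
  have hD : (span K (Set.range D.row)).map V.mkQ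
      ≤ (T ⊔ span K (Set.range (fromCols Y D).row)).map (V.mkQ ∘ₗ π) := by
    rw [map_comp]
    refine map_mono (span_le.2 (Set.range_subset_iff.2 fun i => ?_))
    exact ⟨fromCols Y D i, mem_sup_right (subset_span ⟨i, rfl⟩), rfl⟩
  exact (Nat.add_le_add_left (finrank_mono hD) _).trans
    (finrank_add_finrank_map_le_of_le_ker _ le_sup_left hTker)

theorem exists_disjoint_span_range_row_sub_mul [Fintype m] (D : Matrix l n K) (B : Matrix m n K) :
    ∃ C : Matrix l m K,
      Disjoint (span K (Set.range (D - C * B).row)) (span K (Set.range B.row)) := by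
  obtain ⟨U, hU⟩ := (span K (Set.range B.row)).exists_isCompl
  have hrow : ∀ i, ∃ c : m → K, D i - c ᵥ* B ∈ U := by
    intro i
    obtain ⟨v, hv, u, hu, hvu⟩ := mem_sup.1 (hU.sup_eq_top ▸ mem_top : D i ∈ _ ⊔ U)
    rw [← range_vecMulLinear] at hv
    obtain ⟨c, rfl⟩ := hv
    exact ⟨c, by rwa [← hvu, vecMulLinear_apply, add_sub_cancel_left]⟩
  choose C hC using hrow
  exact ⟨of C, hU.disjoint.symm.mono_left (span_le.2 (Set.range_subset_iff.2 hC))⟩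

theorem rank_sub_mul_eq_finrank_map_mkQ [Fintype n] [Fintype m] [Finite l] {D : Matrix l n K}
    {B : Matrix m n K} {C : Matrix l m K}
    (h : Disjoint (span K (Set.range (D - C * B).row)) (span K (Set.range B.row))) :
    (D - C * B).rank
      = finrank K ((span K (Set.range D.row)).map (span K (Set.range B.row)).mkQ) := by
  have hrows : (span K (Set.range B.row)).mkQ ∘ (D - C * B).row
      = (span K (Set.range B.row)).mkQ ∘ D.row :=
    funext fun i => (Submodule.Quotient.eq _).2 <| by
      change D i - C i ᵥ* B - D i ∈ _
      simpa using neg_mem (vecMul_mem_span_range_row (C i) B)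
  rw [rank_eq_finrank_span_row, ← finrank_map_eq_of_disjoint_ker _ (by rwa [ker_mkQ]),
    map_span, map_span, ← Set.range_comp, ← Set.range_comp, hrows]

end Matrix

theorem stmt12 (K : Type*) [Field K] (m1 m2 n p q : ℕ)
    (A11 : Matrix (Fin m1) (Fin p) K) (A21 : Matrix (Fin m2) (Fin p) K)
    (A22 : Matrix (Fin m2) (Fin q) K) (An2 : Matrix (Fin n) (Fin q) K) :
    ∃ X : Matrix (Fin n) (Fin p) K,
      (∀ Y : Matrix (Fin n) (Fin p) K,
        (Matrix.fromRows A11 (Matrix.fromRows A21 X)).rank ≤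
          (Matrix.fromRows A11 (Matrix.fromRows A21 Y)).rank) ∧
      (∀ Y : Matrix (Fin n) (Fin p) K,
        (Matrix.fromBlocks A21 A22 X An2).rank ≤
          (Matrix.fromBlocks A21 A22 Y An2).rank) := by
  obtain ⟨C, hC⟩ := exists_disjoint_span_range_row_sub_mul An2 A22
  refine ⟨C * A21, fun Y => rank_fromRows_fromRows_mul_le A11 A21 C Y, fun Y => ?_⟩
  calc (fromBlocks A21 A22 (C * A21) An2).rank
      ≤ (fromCols A21 A22).rank + (An2 - C * A22).rank := rank_fromBlocks_mul_le A21 A22 C An2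
    _ = (fromCols A21 A22).rank
          + finrank K ((span K (Set.range An2.row)).map (span K (Set.range A22.row)).mkQ) := by
      rw [rank_sub_mul_eq_finrank_map_mkQ hC]
    _ ≤ (fromBlocks A21 A22 Y An2).rank := rank_fromCols_add_finrank_map_mkQ_le A21 A22 Y An2
end
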